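/- Let V be a type and {ψ_α : V → Fin 2}_{α ∈ A} a nonempty family of functions, each satisfying the triangle condition: for all u, v, w distinguished by some ternary relation T, T u v w implies (ψ_α u : ℕ) + ψ_α v + ψ_α w ≠ 1. Then the pointwise supremum ψ(v) = ⨆_α ψ_α(v) also satisfies: for all u v w with T u v w, (ψ u : ℕ) + ψ v + ψ w ≠ 1. -/

import Mathlib

/-! A sum of three values in `{0, 1}` equals `1` exactly when one value is `1` and the other two
are `0`. If the maximum `ψ` had this pattern on a triple, some `ψ_α` would be `1` where `ψ` is,
and `ψ_α ≤ ψ` would vanish where `ψ` does, so `ψ_α` would have the same pattern. -/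

lemma Fin.val_add_val_add_val_eq_one_iff (a b c : Fin 2) :
    (a : ℕ) + b + c = 1 ↔
      (a = 1 ∧ b = 0 ∧ c = 0) ∨ (a = 0 ∧ b = 1 ∧ c = 0) ∨ (a = 0 ∧ b = 0 ∧ c = 1) := by
  revert a b c
  decide

section

variable {V A : Type*} (ψ : A → V → Fin 2)

open Classical in
noncomputable def finTwoSup (x : V) : Fin 2 := if ∃ α, ψ α x = 1 then 1 else 0

variable {ψ}

lemma finTwoSup_eq_one_iff {x : V} : finTwoSup ψ x = 1 ↔ ∃ α, ψ α x = 1 := by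
  unfold finTwoSup
  split_ifs with hx <;> simp [hx]

lemma finTwoSup_eq_zero_iff {x : V} : finTwoSup ψ x = 0 ↔ ∀ α, ψ α x = 0 := by
  have hψ : ∀ α, ψ α x = 0 ↔ ψ α x ≠ 1 := fun α => by omega
  simp only [hψ, ← not_exists, ← finTwoSup_eq_one_iff]
  omega

lemma exists_eq_one_of_finTwoSup_eq_one_zero_zero {x y z : V} (hx : finTwoSup ψ x = 1)
    (hy : finTwoSup ψ y = 0) (hz : finTwoSup ψ z = 0) :
    ∃ α, ψ α x = 1 ∧ ψ α y = 0 ∧ ψ α z = 0 := by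
  obtain ⟨α, hα⟩ := finTwoSup_eq_one_iff.1 hx
  exact ⟨α, hα, finTwoSup_eq_zero_iff.1 hy α, finTwoSup_eq_zero_iff.1 hz α⟩

end

open Classical in
theorem stmt8_general {V A : Type*} (T : V → V → V → Prop)
    (ψ : A → V → Fin 2)
    (h : ∀ α u v w, T u v w →
      ((ψ α u : ℕ) + (ψ α v : ℕ) + (ψ α w : ℕ) ≠ 1)) :
    ∀ u v w, T u v w →
      ((fun x => if ∃ α, ψ α x = 1 then (1 : Fin 2) else 0) u : ℕ) +
      ((fun x => if ∃ α, ψ α x = 1 then (1 : Fin 2) else 0) v : ℕ) +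
      ((fun x => if ∃ α, ψ α x = 1 then (1 : Fin 2) else 0) w : ℕ) ≠ 1 := by
  intro u v w hT hsum
  have hα : ∀ α, ¬ ((ψ α u = 1 ∧ ψ α v = 0 ∧ ψ α w = 0) ∨ (ψ α u = 0 ∧ ψ α v = 1 ∧ ψ α w = 0) ∨
      (ψ α u = 0 ∧ ψ α v = 0 ∧ ψ α w = 1)) := fun α hpat =>
    h α u v w hT ((Fin.val_add_val_add_val_eq_one_iff _ _ _).2 hpat)
  rcases (Fin.val_add_val_add_val_eq_one_iff (finTwoSup ψ u) (finTwoSup ψ v)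
    (finTwoSup ψ w)).1 hsum with ⟨hu, hv, hw⟩ | ⟨hu, hv, hw⟩ | ⟨hu, hv, hw⟩
  · obtain ⟨α, hαu, hαv, hαw⟩ := exists_eq_one_of_finTwoSup_eq_one_zero_zero hu hv hw
    exact hα α (.inl ⟨hαu, hαv, hαw⟩)
  · obtain ⟨α, hαv, hαu, hαw⟩ := exists_eq_one_of_finTwoSup_eq_one_zero_zero hv hu hw
    exact hα α (.inr (.inl ⟨hαu, hαv, hαw⟩))
  · obtain ⟨α, hαw, hαu, hαv⟩ := exists_eq_one_of_finTwoSup_eq_one_zero_zero hw hu hv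
    exact hα α (.inr (.inr ⟨hαu, hαv, hαw⟩))

open Classical in
theorem stmt8 {V A : Type*} [Nonempty A] (T : V → V → V → Prop)
    (ψ : A → V → Fin 2)
    (h : ∀ α u v w, T u v w →
      ((ψ α u : ℕ) + (ψ α v : ℕ) + (ψ α w : ℕ) ≠ 1)) :
    ∀ u v w, T u v w →
      ((fun x => if ∃ α, ψ α x = 1 then (1 : Fin 2) else 0) u : ℕ) +
      ((fun x => if ∃ α, ψ α x = 1 then (1 : Fin 2) else 0) v : ℕ) +
      ((fun x => if ∃ α, ψ α x = 1 then (1 : Fin 2) else 0) w : ℕ) ≠ 1 :=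
  stmt8_general T ψ h
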